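/- arXiv:1903.01023 — 5 statements merged into one kernel-verified Lean document; each statement's English description precedes it below -/
import Mathlib

section
/- Let W be a symmetric doubly stochastic matrix with σ_max(W - J) < 1, where J = 𝟙𝟙ᵀ/n. If (v^k) converges to v⋆ and (w^k) satisfies w^{k+1} = W w^k + (v^{k+1} - v^k), w^0 = v^0, then (w^k) converges to J v⋆. -/
/-!
Since `W` is symmetric with unit row sums, the averaging matrix `J` is an idempotent with
`J W = W J = J`. Hence `J w^k = J v^k` for every `k`, and the error `e^k = w^k - J v^k` obeys
`e^{k+1} = (W - J) e^k + (I - J)(v^{k+1} - v^k)`. The increments of `v` vanish and `W - J` is a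
contraction, so `e^k → 0`, i.e. `w^k` has the limit of `J v^k`, which is `J v⋆`.
-/

open Matrix Filter Topology

section GeometricRecursion

variable {a b : ℕ → ℝ} {r : ℝ}

lemma le_pow_mul_add_div_of_le_mul_add {c : ℝ} {N : ℕ} (hr0 : 0 ≤ r) (hr1 : r < 1)
    (hc : 0 ≤ c) (hrec : ∀ k ≥ N, a (k + 1) ≤ r * a k + c) (m : ℕ) :
    a (m + N) ≤ r ^ m * a N + c / (1 - r) := by
  have h1r : 0 < 1 - r := by linarith
  induction m with
  | zero => simpa using div_nonneg hc h1r.le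
  | succ m ih =>
    calc a (m + 1 + N) = a (m + N + 1) := by rw [Nat.add_right_comm]
      _ ≤ r * a (m + N) + c := hrec _ (Nat.le_add_left _ _)
      _ ≤ r * (r ^ m * a N + c / (1 - r)) + c := by gcongr
      _ = r ^ (m + 1) * a N + c / (1 - r) := by field_simp; ring

lemma tendsto_zero_of_le_mul_add (ha : ∀ k, 0 ≤ a k) (hr0 : 0 ≤ r) (hr1 : r < 1)
    (hrec : ∀ k, a (k + 1) ≤ r * a k + b k) (hb : Tendsto b atTop (𝓝 0)) :
    Tendsto a atTop (𝓝 0) := by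
  refine tendsto_order.2 ⟨fun ε hε => .of_forall fun k => hε.trans_le (ha k), fun ε hε => ?_⟩
  have h1r : 0 < 1 - r := by linarith
  set c := ε * (1 - r) / 2 with hc_def
  have hc : 0 < c := by positivity
  obtain ⟨N, hN⟩ := eventually_atTop.1 ((tendsto_order.1 hb).2 c hc)
  have hbound : ∀ m, a (m + N) ≤ r ^ m * a N + c / (1 - r) :=
    le_pow_mul_add_div_of_le_mul_add hr0 hr1 hc.le
      fun k hk => (hrec k).trans (by linarith [hN k hk])
  have hlim : Tendsto (fun m => r ^ m * a N + c / (1 - r)) atTop (𝓝 (c / (1 - r))) := by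
    simpa using
      ((tendsto_pow_atTop_nhds_zero_of_lt_one hr0 hr1).mul_const (a N)).add_const (c / (1 - r))
  have hlt : c / (1 - r) < ε := by
    rw [div_lt_iff₀ h1r]
    linarith [mul_pos hε h1r]
  obtain ⟨M, hM⟩ := eventually_atTop.1 ((tendsto_order.1 hlim).2 ε hlt)
  refine eventually_atTop.2 ⟨M + N, fun k hk => ?_⟩
  obtain ⟨m, rfl⟩ : ∃ m, k = m + N := ⟨k - N, by omega⟩
  exact (hbound m).trans_lt (hM m (by omega))

end GeometricRecursion

section Tracking

variable {𝕜 E : Type*} [NontriviallyNormedField 𝕜] [NormedAddCommGroup E] [NormedSpace 𝕜 E]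
  {T P : E →L[𝕜] E} {v w : ℕ → E}

lemma map_tracking_eq (hPT : P * T = P) (hw0 : P (w 0) = P (v 0))
    (hrec : ∀ k, w (k + 1) = T (w k) + (v (k + 1) - v k)) (k : ℕ) :
    P (w k) = P (v k) := by
  induction k with
  | zero => exact hw0
  | succ k ih =>
    rw [hrec k, map_add, map_sub, ← mul_apply_eq_comp, hPT, ih]
    abel

lemma tracking_error_succ (hPT : P * T = P) (hTP : T * P = P) (hP : IsIdempotentElem P)
    (hw0 : P (w 0) = P (v 0)) (hrec : ∀ k, w (k + 1) = T (w k) + (v (k + 1) - v k)) (k : ℕ) :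
    w (k + 1) - P (v (k + 1)) =
      (T - P) (w k - P (v k)) + (v (k + 1) - v k - P (v (k + 1) - v k)) := by
  have hTPv : T (P (v k)) = P (v k) := by rw [← mul_apply_eq_comp, hTP]
  have hPPv : P (P (v k)) = P (v k) := by rw [← mul_apply_eq_comp, hP.eq]
  rw [_root_.sub_apply, map_sub, map_sub, hTPv, hPPv,
    map_tracking_eq hPT hw0 hrec k, hrec k, map_sub]
  abel

theorem tendsto_tracking (hPT : P * T = P) (hTP : T * P = P) (hP : IsIdempotentElem P)
    (hcontr : ‖T - P‖ < 1) {vstar : E} (hv : Tendsto v atTop (𝓝 vstar))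
    (hw0 : P (w 0) = P (v 0)) (hrec : ∀ k, w (k + 1) = T (w k) + (v (k + 1) - v k)) :
    Tendsto w atTop (𝓝 (P vstar)) := by
  set d := fun k => v (k + 1) - v k
  have hd : Tendsto d atTop (𝓝 0) := by
    simpa using (hv.comp (tendsto_add_atTop_nat 1)).sub hv
  have hdP : Tendsto (fun k => ‖d k - P (d k)‖) atTop (𝓝 0) := by
    simpa using (hd.sub ((P.continuous.tendsto 0).comp hd)).norm
  have herr : Tendsto (fun k => w k - P (v k)) atTop (𝓝 0) := by
    refine tendsto_zero_iff_norm_tendsto_zero.2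
      (tendsto_zero_of_le_mul_add (fun _ => norm_nonneg _) (norm_nonneg _) hcontr
        (fun k => ?_) hdP)
    rw [tracking_error_succ hPT hTP hP hw0 hrec k]
    exact (norm_add_le _ _).trans (by gcongr; exact (T - P).le_opNorm _)
  simpa using herr.add ((P.continuous.tendsto vstar).comp hv)

end Tracking

section AveragingMatrix

variable {ι K : Type*} [Fintype ι]

lemma Matrix.mul_of_one_eq_of_mulVec_one [NonAssocSemiring K] {W : Matrix ι ι K}
    (hW : W *ᵥ (fun _ => 1) = fun _ => 1) :
    W * of (fun _ _ => (1 : K)) = of fun _ _ => 1 := by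
  ext i j
  simpa [Matrix.mul_apply, mulVec, dotProduct] using congrFun hW i

lemma Matrix.of_one_mul_eq_of_vecMul_one [NonAssocSemiring K] {W : Matrix ι ι K}
    (hW : (fun _ => 1) ᵥ* W = fun _ => 1) :
    of (fun _ _ => (1 : K)) * W = of fun _ _ => 1 := by
  ext i j
  simpa [Matrix.mul_apply, vecMul, dotProduct] using congrFun hW j

lemma Matrix.isIdempotentElem_inv_card_smul_of_one [Field K] [CharZero K] :
    IsIdempotentElem ((Fintype.card ι : K)⁻¹ • of fun (_ _ : ι) => (1 : K)) := by
  ext i j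
  have : Nonempty ι := ⟨i⟩
  have : (Fintype.card ι : K) ≠ 0 := Nat.cast_ne_zero.2 Fintype.card_ne_zero
  simp only [Matrix.smul_apply, Matrix.mul_apply, of_apply, mul_one,
    Finset.sum_const, Finset.card_univ, nsmul_eq_mul, smul_eq_mul]
  field_simp

end AveragingMatrix

theorem stmt1_general {n : ℕ} (W : Matrix (Fin n) (Fin n) ℝ)
    (hWsymm : Wᵀ = W)
    (hWrow : W.mulVec (fun _ => (1 : ℝ)) = fun _ => (1 : ℝ))
    (J : Matrix (Fin n) (Fin n) ℝ)
    (hJ : J = (n : ℝ)⁻¹ • Matrix.of (fun _ _ => (1 : ℝ)))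
    (hσ : ‖Matrix.toEuclideanCLM (𝕜 := ℝ) (W - J)‖ < 1)
    (v w : ℕ → EuclideanSpace ℝ (Fin n)) (vstar : EuclideanSpace ℝ (Fin n))
    (hv : Tendsto v atTop (nhds vstar))
    (hw0 : w 0 = v 0)
    (hrec : ∀ k, w (k + 1) = Matrix.toEuclideanCLM (𝕜 := ℝ) W (w k) + (v (k + 1) - v k)) :
    Tendsto w atTop (nhds (Matrix.toEuclideanCLM (𝕜 := ℝ) J vstar)) := by
  have hWcol : (fun _ => (1 : ℝ)) ᵥ* W = fun _ => 1 := by rw [← mulVec_transpose, hWsymm, hWrow]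
  have hJW : J * W = J := by rw [hJ, smul_mul_assoc, of_one_mul_eq_of_vecMul_one hWcol]
  have hWJ : W * J = J := by rw [hJ, mul_smul_comm, mul_of_one_eq_of_mulVec_one hWrow]
  have hJJ : IsIdempotentElem J := by
    simpa [hJ] using isIdempotentElem_inv_card_smul_of_one (ι := Fin n) (K := ℝ)
  let f := Matrix.toEuclideanCLM (𝕜 := ℝ) (n := Fin n)
  refine tendsto_tracking (T := f W) (P := f J) ?_ ?_ (hJJ.map f) (by rwa [← map_sub]) hv
    (by rw [hw0]) hrec
  · rw [← map_mul, hJW]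
  · rw [← map_mul, hWJ]

/-- Consensus tracking `(eq. gcon-1)`: if `σ_max(W - J) < 1`, `v^k → v⋆` and
`w^{k+1} = W w^k + (v^{k+1} - v^k)`, `w^0 = v^0`, then `w^k → J v⋆`. -/
theorem stmt1 {n : ℕ} (hn : 0 < n) (W : Matrix (Fin n) (Fin n) ℝ)
    (hWsymm : Wᵀ = W)
    (hWrow : W.mulVec (fun _ => (1 : ℝ)) = fun _ => (1 : ℝ))
    (J : Matrix (Fin n) (Fin n) ℝ)
    (hJ : J = (n : ℝ)⁻¹ • Matrix.of (fun _ _ => (1 : ℝ)))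
    (hσ : ‖Matrix.toEuclideanCLM (𝕜 := ℝ) (W - J)‖ < 1)
    (v w : ℕ → EuclideanSpace ℝ (Fin n)) (vstar : EuclideanSpace ℝ (Fin n))
    (hv : Tendsto v atTop (nhds vstar))
    (hw0 : w 0 = v 0)
    (hrec : ∀ k, w (k + 1) = Matrix.toEuclideanCLM (𝕜 := ℝ) W (w k) + (v (k + 1) - v k)) :
    Tendsto w atTop (nhds (Matrix.toEuclideanCLM (𝕜 := ℝ) J vstar)) :=
  stmt1_general W hWsymm hWrow J hJ hσ v w vstar hv hw0 hrec
end

section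
/- Let W be a symmetric doubly stochastic matrix with σ_max(W - J) < 1, where J = 𝟙𝟙ᵀ/n. If (v^k) converges to v⋆ and (w^k) satisfies w^{k+1} = W(w^k + v^{k+1} - v^k), w^0 = W v^0, then (w^k) converges to J v⋆. -/
open Matrix Filter

lemma seq_aux (c : ℝ) (hc0 : 0 ≤ c) (hc1 : c < 1) (a b : ℕ → ℝ)
    (ha : ∀ k, 0 ≤ a k) (hb0 : ∀ k, 0 ≤ b k)
    (hrec : ∀ k, a (k+1) ≤ c * a k + b k) (hb : Tendsto b atTop (nhds 0)) :
    Tendsto a atTop (nhds 0) := by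
  rw [Metric.tendsto_atTop]
  intro ε hε
  have h1c : 0 < 1 - c := by linarith
  obtain ⟨N, hN⟩ := (Metric.tendsto_atTop.1 hb) (ε * (1 - c) / 2) (by positivity)
  -- for k ≥ N, b k < ε(1-c)/2
  have hbk : ∀ k ≥ N, b k < ε * (1 - c) / 2 := by
    intro k hk
    have := hN k hk
    rw [Real.dist_eq, sub_zero, abs_of_nonneg (hb0 k)] at this
    exact this
  -- a (N + m) ≤ c ^ m * a N + ε/2
  have key : ∀ m, a (N + m) ≤ c ^ m * a N + ε / 2 := by
    intro m
    induction m with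
    | zero => simp; linarith [hε]
    | succ m ih =>
      have h := hrec (N + m)
      have hb' := hbk (N + m) (Nat.le_add_right _ _)
      calc a (N + (m+1)) = a ((N + m) + 1) := by ring_nf
        _ ≤ c * a (N + m) + b (N + m) := h
        _ ≤ c * (c ^ m * a N + ε / 2) + ε * (1 - c) / 2 := by
            have := mul_le_mul_of_nonneg_left ih hc0
            linarith
        _ ≤ c ^ (m+1) * a N + ε / 2 := by
            have hc2 : c * (ε / 2) ≤ ε / 2 * 1 := by
              rw [mul_comm]; apply mul_le_mul_of_nonneg_left (le_of_lt hc1) (by positivity)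
            ring_nf
            ring_nf at hc2
            nlinarith [pow_nonneg hc0 m, ha N]
  -- choose M with c ^ M * a N < ε / 2
  obtain ⟨M, hM⟩ : ∃ M, c ^ M * a N < ε / 2 := by
    have := tendsto_pow_atTop_nhds_zero_of_lt_one hc0 hc1
    have h2 : Tendsto (fun m => c ^ m * a N) atTop (nhds (0 * a N)) :=
      this.mul_const _
    rw [zero_mul] at h2
    have := (Metric.tendsto_atTop.1 h2) (ε / 2) (by positivity)
    obtain ⟨M, hM⟩ := this
    refine ⟨M, ?_⟩
    have h3 := hM M le_rfl
    rw [Real.dist_eq, sub_zero] at h3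
    exact lt_of_abs_lt h3
  refine ⟨N + M, fun k hk => ?_⟩
  rw [Real.dist_eq, sub_zero, abs_of_nonneg (ha k)]
  obtain ⟨m, rfl⟩ := Nat.exists_eq_add_of_le hk
  have hle : c ^ (M + m) * a N ≤ c ^ M * a N := by
    apply mul_le_mul_of_nonneg_right _ (ha N)
    exact pow_le_pow_of_le_one hc0 (le_of_lt hc1) (Nat.le_add_right _ _)
  have : a (N + M + m) ≤ c ^ M * a N + ε / 2 := by
    calc a (N + M + m) = a (N + (M + m)) := by rw [Nat.add_assoc]
      _ ≤ c ^ (M+m) * a N + ε / 2 := key (M+m)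
      _ ≤ c ^ M * a N + ε / 2 := by linarith
  linarith

/-- Consensus tracking `(eq. gcon-2)`: if `σ_max(W - J) < 1`, `v^k → v⋆` and
`w^{k+1} = W (w^k + v^{k+1} - v^k)`, `w^0 = W v^0`, then `w^k → J v⋆`. -/
theorem stmt2 {n : ℕ} (hn : 0 < n) (W : Matrix (Fin n) (Fin n) ℝ)
    (hWsymm : Wᵀ = W)
    (hWrow : W.mulVec (fun _ => (1 : ℝ)) = fun _ => (1 : ℝ))
    (J : Matrix (Fin n) (Fin n) ℝ)
    (hJ : J = (n : ℝ)⁻¹ • Matrix.of (fun _ _ => (1 : ℝ)))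
    (hσ : ‖Matrix.toEuclideanCLM (𝕜 := ℝ) (W - J)‖ < 1)
    (v w : ℕ → EuclideanSpace ℝ (Fin n)) (vstar : EuclideanSpace ℝ (Fin n))
    (hv : Tendsto v atTop (nhds vstar))
    (hw0 : w 0 = Matrix.toEuclideanCLM (𝕜 := ℝ) W (v 0))
    (hrec : ∀ k, w (k + 1) = Matrix.toEuclideanCLM (𝕜 := ℝ) W (w k + v (k + 1) - v k)) :
    Tendsto w atTop (nhds (Matrix.toEuclideanCLM (𝕜 := ℝ) J vstar)) := by
  have hn' : (n : ℝ) ≠ 0 := Nat.cast_ne_zero.mpr hn.ne'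
  -- row and column sums of W are 1
  have hrow : ∀ i, ∑ k, W i k = 1 := by
    intro i
    have := congrFun hWrow i
    simpa [Matrix.mulVec, dotProduct] using this
  have hcol : ∀ j, ∑ k, W k j = 1 := by
    intro j
    have h : ∀ k, W k j = W j k := by
      intro k
      have := congrFun (congrFun hWsymm j) k
      simpa [Matrix.transpose_apply] using this
    rw [Finset.sum_congr rfl (fun k _ => h k)]
    exact hrow j
  -- matrix identities
  have hJW : J * W = J := by
    ext i j
    simp only [hJ, Matrix.mul_apply, Matrix.smul_apply, Matrix.of_apply, smul_eq_mul, one_mul,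
      mul_one]
    rw [← Finset.mul_sum, hcol j]
    simp
  have hWJ : W * J = J := by
    ext i j
    simp only [hJ, Matrix.mul_apply, Matrix.smul_apply, Matrix.of_apply, smul_eq_mul, one_mul,
      mul_one]
    rw [← Finset.sum_mul, hrow i]
    simp
  have hJJ : J * J = J := by
    ext i j
    simp only [hJ, Matrix.mul_apply, Matrix.smul_apply, Matrix.of_apply, smul_eq_mul, mul_one,
      Finset.sum_const, Finset.card_univ, Fintype.card_fin, nsmul_eq_mul]
    field_simp
  set f := Matrix.toEuclideanCLM (𝕜 := ℝ) W with hf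
  set g := Matrix.toEuclideanCLM (𝕜 := ℝ) J with hg
  set A := Matrix.toEuclideanCLM (𝕜 := ℝ) (W - J) with hA
  have hAfg : A = f - g := by rw [hA, hf, hg, map_sub]
  have hgf : ∀ x, g (f x) = g x := by
    intro x
    rw [← ContinuousLinearMap.mul_apply, hf, hg, ← _root_.map_mul, hJW]
  have hfg : ∀ x, f (g x) = g x := by
    intro x
    rw [← ContinuousLinearMap.mul_apply, hf, hg, ← _root_.map_mul, hWJ]
  have hgg : ∀ x, g (g x) = g x := by
    intro x
    rw [← ContinuousLinearMap.mul_apply, hg, ← _root_.map_mul, hJJ]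
  -- g (w k) = g (v k)
  have hgw : ∀ k, g (w k) = g (v k) := by
    intro k
    induction k with
    | zero => rw [hw0]; exact hgf (v 0)
    | succ k ih =>
      rw [hrec k, hgf, map_sub, map_add, ih]
      abel
  set u : ℕ → EuclideanSpace ℝ (Fin n) := fun k => w k - g (v k) with hu
  have hurec : ∀ k, u (k + 1) = A (u k + (v (k + 1) - v k)) := by
    intro k
    rw [hAfg]
    simp only [hu, ContinuousLinearMap.sub_apply, map_add, map_sub, hrec k, hfg, hgg, hgw k]
    abel
  -- norm recursion
  set c := ‖A‖ with hc
  have hc0 : 0 ≤ c := norm_nonneg _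
  have hnormrec : ∀ k, ‖u (k+1)‖ ≤ c * ‖u k‖ + c * ‖v (k+1) - v k‖ := by
    intro k
    rw [hurec k]
    calc ‖A (u k + (v (k+1) - v k))‖ ≤ c * ‖u k + (v (k+1) - v k)‖ := A.le_opNorm _
      _ ≤ c * (‖u k‖ + ‖v (k+1) - v k‖) := by
          apply mul_le_mul_of_nonneg_left (norm_add_le _ _) hc0
      _ = c * ‖u k‖ + c * ‖v (k+1) - v k‖ := by ring
  -- b tends to 0
  have hd : Tendsto (fun k => v (k+1) - v k) atTop (nhds 0) := by
    have h1 : Tendsto (fun k => v (k+1)) atTop (nhds vstar) :=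
      hv.comp (tendsto_add_atTop_nat 1)
    have := h1.sub hv
    simpa using this
  have hb : Tendsto (fun k => c * ‖v (k+1) - v k‖) atTop (nhds 0) := by
    have := (hd.norm).const_mul c
    simpa using this
  have hu0 : Tendsto (fun k => ‖u k‖) atTop (nhds 0) :=
    seq_aux c hc0 hσ (fun k => ‖u k‖) (fun k => c * ‖v (k+1) - v k‖)
      (fun k => norm_nonneg _) (fun k => by positivity) hnormrec hb
  have hu0' : Tendsto u atTop (nhds 0) := by
    rw [← tendsto_zero_iff_norm_tendsto_zero] at hu0
    exact hu0
  have hgv : Tendsto (fun k => g (v k)) atTop (nhds (g vstar)) :=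
    (g.continuous.tendsto vstar).comp hv
  have : Tendsto (fun k => u k + g (v k)) atTop (nhds (0 + g vstar)) := hu0'.add hgv
  rw [zero_add] at this
  have hw : w = fun k => u k + g (v k) := by
    funext k; simp [hu]
  rw [hw]
  exact this
end

section
/- For the decentralized gradient descent recursion ξ^{k+1} = ξ^k - η û^k, v^k = ξ^k, u^k = ∇f(v̂^k), with consensus-tracking states ζ_v^{k+1} = Wζ_v^k + (W-I)v^k, v̂^k = ζ_v^k + v^k, ζ_u^{k+1} = Wζ_u^k + (W-I)u^k, û^k = ζ_u^k + u^k, and ζ_v^0 = ζ_u^0 = 0, the sequence v̂ satisfies the DIGing recursion v̂^{k+2} = 2W v̂^{k+1} - W² v̂^k - η(u^{k+1} - u^k) for all k ≥ 0. -/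
open Matrix

/-- The decentralized gradient descent of Example 3 (base gradient descent plus consensus
tracking of `v` and `u`) satisfies the DIGing recursion
`v̂^{k+2} = 2W v̂^{k+1} - W² v̂^k - η (u^{k+1} - u^k)`. -/
theorem stmt8 {n d : ℕ} (W : Matrix (Fin n) (Fin n) ℝ)
    (hWsymm : Wᵀ = W)
    (hWrow : W.mulVec (fun _ => (1 : ℝ)) = fun _ => (1 : ℝ))
    (hWcol : Matrix.vecMul (fun _ => (1 : ℝ)) W = fun _ => (1 : ℝ))
    (η : ℝ) (hη : 0 < η)
    (gradf : Matrix (Fin n) (Fin d) ℝ → Matrix (Fin n) (Fin d) ℝ)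
    (ξ v u vhat uhat ζv ζu : ℕ → Matrix (Fin n) (Fin d) ℝ)
    (hξ : ∀ k, ξ (k + 1) = ξ k - η • uhat k)
    (hv : ∀ k, v k = ξ k)
    (hu : ∀ k, u k = gradf (vhat k))
    (hζv : ∀ k, ζv (k + 1) = W * ζv k + (W - 1) * v k)
    (hvhat : ∀ k, vhat k = ζv k + v k)
    (hζu : ∀ k, ζu (k + 1) = W * ζu k + (W - 1) * u k)
    (huhat : ∀ k, uhat k = ζu k + u k)
    (hζv0 : ζv 0 = 0) (hζu0 : ζu 0 = 0) :
    ∀ k, vhat (k + 2) =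
      (2 : ℝ) • (W * vhat (k + 1)) - W * W * vhat k - η • (u (k + 1) - u k) := by
  have h1 : ∀ k, vhat (k + 1) = W * vhat k - η • uhat k := by
    intro k
    rw [hvhat, hζv, hvhat, hv, hv, hξ]
    simp only [Matrix.mul_add, Matrix.sub_mul, Matrix.one_mul]
    abel
  have h2 : ∀ k, uhat (k + 1) = W * uhat k + (u (k + 1) - u k) := by
    intro k
    rw [huhat, hζu, huhat]
    simp only [Matrix.mul_add, Matrix.sub_mul, Matrix.one_mul]
    abel
  intro k
  rw [h1 (k+1), h1 k, h2 k]
  simp only [Matrix.mul_sub, Matrix.mul_smul, smul_sub, two_smul, smul_add, Matrix.mul_assoc]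
  module
end

section
/- Let A ∈ ℝ^{p×p}, B ∈ ℝ^{p×m}, C ∈ ℝ^{q×p}, D ∈ ℝ^{q×m}, M a symmetric (q+m)×(q+m) matrix, and τ ∈ (0,1). Suppose there exists P ≻ 0 such that [[AᵀPA - τ²P, AᵀPB],[BᵀPA, BᵀPB]] + [C D; 0 I]ᵀ M [C D; 0 I] ⪯ 0. If the sequences ξ, u, v satisfy ξ^{k+1} = Aξ^k + Bu^k, v^k = Cξ^k + Du^k, and the pointwise quadratic constraint [v^k - v⋆; u^k - u⋆]ᵀ M [v^k - v⋆; u^k - u⋆] ≥ 0 for all k, where (ξ⋆, u⋆, v⋆) is a fixed point (ξ⋆ = Aξ⋆ + Bu⋆, v⋆ = Cξ⋆ + Du⋆), then ‖ξ^k - ξ⋆‖_P ≤ τ^k ‖ξ^0 - ξ⋆‖_P for all k, where ‖x‖_P² = xᵀPx. -/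
open Matrix

/-!
The LMI, tested on `z = (ξ^k - ξ⋆, u^k - u⋆)`, says that `V(x) = xᵀ P x` satisfies
`V(ξ^{k+1} - ξ⋆) - τ² V(ξ^k - ξ⋆) + qₖ ≤ 0`, where `qₖ ≥ 0` is the quadratic constraint at step `k`.
Hence `V` contracts by `τ²` per step, and taking square roots gives the rate `τ^k`.
-/

section QuadraticForms

variable {R : Type*} [CommRing R] {l n m : Type*} [Fintype l] [Fintype n] [Fintype m]

omit [Fintype l] in
lemma mulVec_add_mulVec_sub (A : Matrix l n R) (B : Matrix l m R) (x x' : n → R) (y y' : m → R) :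
    A *ᵥ x + B *ᵥ y - (A *ᵥ x' + B *ᵥ y') = A *ᵥ (x - x') + B *ᵥ (y - y') := by
  simp only [mulVec_sub]
  abel

lemma dotProduct_transpose_mul_mul_mulVec (N : Matrix l n R) (M : Matrix l l R) (x : n → R) :
    x ⬝ᵥ (Nᵀ * M * N) *ᵥ x = (N *ᵥ x) ⬝ᵥ M *ᵥ (N *ᵥ x) := by
  rw [← mulVec_mulVec, ← mulVec_mulVec, dotProduct_mulVec, vecMul_transpose]

omit [Fintype l] in
lemma fromBlocks_zero_one_mulVec_sumElim [DecidableEq m] (C : Matrix l n R) (D : Matrix l m R)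
    (x : n → R) (w : m → R) :
    fromBlocks C D 0 1 *ᵥ Sum.elim x w = Sum.elim (C *ᵥ x + D *ᵥ w) w := by
  simp [fromBlocks_mulVec]

lemma sumElim_dotProduct_fromBlocks_mulVec_sumElim (τ : R) (A : Matrix n n R)
    (B : Matrix n m R) (P : Matrix n n R) (e : n → R) (w : m → R) :
    Sum.elim e w ⬝ᵥ
        fromBlocks (Aᵀ * P * A - τ ^ 2 • P) (Aᵀ * P * B) (Bᵀ * P * A) (Bᵀ * P * B) *ᵥ
          Sum.elim e w
      = (A *ᵥ e + B *ᵥ w) ⬝ᵥ P *ᵥ (A *ᵥ e + B *ᵥ w) - τ ^ 2 * (e ⬝ᵥ P *ᵥ e) := by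
  simp only [fromBlocks_mulVec, sumElim_dotProduct_sumElim, sub_mulVec, mulVec_add,
    smul_mulVec, dotProduct_add, dotProduct_sub, dotProduct_smul, ← mulVec_mulVec,
    dotProduct_mulVec, vecMul_transpose, smul_eq_mul, Sum.elim_comp_inl, Sum.elim_comp_inr,
    add_vecMul, add_dotProduct]
  ring

end QuadraticForms

theorem dotProduct_mulVec_step_le_of_posSemidef_of_iqc {n m l : Type*}
    [Fintype n] [Fintype m] [Fintype l] [DecidableEq m] {τ : ℝ}
    {A : Matrix n n ℝ} {B : Matrix n m ℝ} {C : Matrix l n ℝ} {D : Matrix l m ℝ}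
    {M : Matrix (l ⊕ m) (l ⊕ m) ℝ} {P : Matrix n n ℝ}
    -- Without the second type ascription `*` elaborates to the `CStarMatrix` product.
    (hLMI : (-(fromBlocks (Aᵀ * P * A - τ ^ 2 • P) (Aᵀ * P * B) (Bᵀ * P * A) (Bᵀ * P * B)
      + (fromBlocks C D 0 (1 : Matrix m m ℝ))ᵀ * M * fromBlocks C D 0 (1 : Matrix m m ℝ))).PosSemidef)
    (e : n → ℝ) (w : m → ℝ)
    (hIQC : 0 ≤ Sum.elim (C *ᵥ e + D *ᵥ w) w ⬝ᵥ M *ᵥ Sum.elim (C *ᵥ e + D *ᵥ w) w) :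
    (A *ᵥ e + B *ᵥ w) ⬝ᵥ P *ᵥ (A *ᵥ e + B *ᵥ w) ≤ τ ^ 2 * (e ⬝ᵥ P *ᵥ e) := by
  have hLMI_form := hLMI.dotProduct_mulVec_nonneg (Sum.elim e w)
  rw [star_trivial, neg_mulVec, dotProduct_neg, add_mulVec, dotProduct_add,
    sumElim_dotProduct_fromBlocks_mulVec_sumElim, dotProduct_transpose_mul_mul_mulVec,
    fromBlocks_zero_one_mulVec_sumElim] at hLMI_form
  linarith

lemma sqrt_le_pow_mul_sqrt_of_le_sq_mul {a : ℕ → ℝ} {τ : ℝ} (hτ : 0 ≤ τ)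
    (h : ∀ k, a (k + 1) ≤ τ ^ 2 * a k) (k : ℕ) :
    √(a k) ≤ τ ^ k * √(a 0) :=
  calc √(a k) ≤ √((τ ^ 2) ^ k * a 0) :=
        Real.sqrt_le_sqrt (le_geom (by positivity) k fun i _ => h i)
    _ = τ ^ k * √(a 0) := by
        rw [Real.sqrt_mul (by positivity), ← pow_mul, mul_comm 2 k, pow_mul,
          Real.sqrt_sq (by positivity)]

theorem stmt15_general {p m q : ℕ} (τ : ℝ) (hτ0 : 0 < τ)
    (A : Matrix (Fin p) (Fin p) ℝ) (B : Matrix (Fin p) (Fin m) ℝ)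
    (C : Matrix (Fin q) (Fin p) ℝ) (D : Matrix (Fin q) (Fin m) ℝ)
    (M : Matrix (Fin q ⊕ Fin m) (Fin q ⊕ Fin m) ℝ)
    (P : Matrix (Fin p) (Fin p) ℝ)
    (hLMI : (-(Matrix.fromBlocks (Aᵀ * P * A - τ ^ 2 • P) (Aᵀ * P * B) (Bᵀ * P * A) (Bᵀ * P * B)
      + (Matrix.fromBlocks C D 0 (1 : Matrix (Fin m) (Fin m) ℝ))ᵀ * M * (Matrix.fromBlocks C D 0 1))).PosSemidef)
    (ξ : ℕ → Fin p → ℝ) (u : ℕ → Fin m → ℝ) (v : ℕ → Fin q → ℝ)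
    (ξs : Fin p → ℝ) (us : Fin m → ℝ) (vs : Fin q → ℝ)
    (hdyn : ∀ k, ξ (k + 1) = A.mulVec (ξ k) + B.mulVec (u k))
    (hout : ∀ k, v k = C.mulVec (ξ k) + D.mulVec (u k))
    (hfixξ : ξs = A.mulVec ξs + B.mulVec us)
    (hfixv : vs = C.mulVec ξs + D.mulVec us)
    (hIQC : ∀ k, 0 ≤ dotProduct (Sum.elim (v k - vs) (u k - us))
      (M.mulVec (Sum.elim (v k - vs) (u k - us)))) :
    ∀ k, Real.sqrt (dotProduct (ξ k - ξs) (P.mulVec (ξ k - ξs)))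
      ≤ τ ^ k * Real.sqrt (dotProduct (ξ 0 - ξs) (P.mulVec (ξ 0 - ξs))) := by
  refine sqrt_le_pow_mul_sqrt_of_le_sq_mul hτ0.le fun k => ?_
  have hstate : ξ (k + 1) - ξs = A *ᵥ (ξ k - ξs) + B *ᵥ (u k - us) := by
    rw [hdyn k, ← mulVec_add_mulVec_sub, ← hfixξ]
  have houtput : v k - vs = C *ᵥ (ξ k - ξs) + D *ᵥ (u k - us) := by
    rw [hout k, ← mulVec_add_mulVec_sub, ← hfixv]
  rw [hstate]
  exact dotProduct_mulVec_step_le_of_posSemidef_of_iqc hLMI _ _ (houtput ▸ hIQC k)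

/-- IQC convergence theorem (Lessard et al.): if there exists `P ≻ 0` satisfying the LMI
`[[AᵀPA - τ²P, AᵀPB],[BᵀPA, BᵀPB]] + [C D; 0 I]ᵀ M [C D; 0 I] ⪯ 0`, and the iterates satisfy
the dynamics and the pointwise IQC with matrix `M` about a fixed point `(ξ⋆, u⋆, v⋆)`, then
`‖ξ^k - ξ⋆‖_P ≤ τ^k ‖ξ^0 - ξ⋆‖_P` for all `k`. -/
theorem stmt15 {p m q : ℕ} (τ : ℝ) (hτ0 : 0 < τ) (hτ1 : τ < 1)
    (A : Matrix (Fin p) (Fin p) ℝ) (B : Matrix (Fin p) (Fin m) ℝ)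
    (C : Matrix (Fin q) (Fin p) ℝ) (D : Matrix (Fin q) (Fin m) ℝ)
    (M : Matrix (Fin q ⊕ Fin m) (Fin q ⊕ Fin m) ℝ) (hM : Mᵀ = M)
    (P : Matrix (Fin p) (Fin p) ℝ) (hP : P.PosDef)
    (hLMI : (-(Matrix.fromBlocks (Aᵀ * P * A - τ ^ 2 • P) (Aᵀ * P * B) (Bᵀ * P * A) (Bᵀ * P * B)
      + (Matrix.fromBlocks C D 0 (1 : Matrix (Fin m) (Fin m) ℝ))ᵀ * M * (Matrix.fromBlocks C D 0 1))).PosSemidef)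
    (ξ : ℕ → Fin p → ℝ) (u : ℕ → Fin m → ℝ) (v : ℕ → Fin q → ℝ)
    (ξs : Fin p → ℝ) (us : Fin m → ℝ) (vs : Fin q → ℝ)
    (hdyn : ∀ k, ξ (k + 1) = A.mulVec (ξ k) + B.mulVec (u k))
    (hout : ∀ k, v k = C.mulVec (ξ k) + D.mulVec (u k))
    (hfixξ : ξs = A.mulVec ξs + B.mulVec us)
    (hfixv : vs = C.mulVec ξs + D.mulVec us)
    (hIQC : ∀ k, 0 ≤ dotProduct (Sum.elim (v k - vs) (u k - us))
      (M.mulVec (Sum.elim (v k - vs) (u k - us)))) :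
    ∀ k, Real.sqrt (dotProduct (ξ k - ξs) (P.mulVec (ξ k - ξs)))
      ≤ τ ^ k * Real.sqrt (dotProduct (ξ 0 - ξs) (P.mulVec (ξ 0 - ξs))) :=
  stmt15_general τ hτ0 A B C D M P hLMI ξ u v ξs us vs hdyn hout hfixξ hfixv hIQC
end

section
/- Suppose (x⋆, y⋆, w⋆) is a fixed point of the centralized consensus ADMM iteration xᵢ = ave(x) - (yᵢ + wᵢ)/ρ, yᵢ = ave(w) - wᵢ, wᵢ = ∇fᵢ(xᵢ), with ρ > 0 and each fᵢ differentiable convex. Then x₁⋆ = x₂⋆ = ⋯ = xₙ⋆, Σᵢ wᵢ⋆ = 0, and the common value x₁⋆ minimizes f₀ = (1/n)Σᵢ fᵢ. -/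
/-!
Summing the `y`-equations gives `∑ yᵢ = 0`; summing the `x`-equations then gives
`ρ⁻¹ • ∑ wᵢ = 0`, so `∑ wᵢ = 0`, hence `yᵢ + wᵢ = ave(w) = 0` and every `xᵢ` equals `ave(x)`.
At this common point the gradients of the convex `fᵢ` sum to zero, and adding the
first-order inequalities `fᵢ(x⋆) + ⟪wᵢ, z - x⋆⟫ ≤ fᵢ(z)` shows that `x⋆` minimizes `∑ᵢ fᵢ`.
-/

open Finset RealInnerProductSpace

section FirstOrder

variable {E : Type*} [NormedAddCommGroup E] [InnerProductSpace ℝ E] [CompleteSpace E]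

theorem ConvexOn.add_inner_le_of_hasGradientAt {s : Set E} {f : E → ℝ} {g x z : E}
    (hf : ConvexOn ℝ s f) (hx : x ∈ s) (hz : z ∈ s) (hg : HasGradientAt f g x) :
    f x + ⟪g, z - x⟫ ≤ f z := by
  set φ : ℝ → ℝ := f ∘ AffineMap.lineMap x z
  have hφ : ConvexOn ℝ (AffineMap.lineMap x z ⁻¹' s) φ := hf.comp_affineMap _
  have hline : HasDerivAt (AffineMap.lineMap x z : ℝ → E) (z - x) 0 :=
    AffineMap.hasDerivAt_lineMap
  have hderiv : HasDerivAt φ ⟪g, z - x⟫ 0 := by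
    have hg' : HasFDerivAt f (InnerProductSpace.toDual ℝ E g)
        (AffineMap.lineMap x z (0 : ℝ)) := by
      simpa using hg.hasFDerivAt
    simpa using hg'.comp_hasDerivAt (0 : ℝ) hline
  have hslope := hφ.le_slope_of_hasDerivAt (x := 0) (y := 1) (by simpa using hx)
    (by simpa using hz) zero_lt_one hderiv
  simp only [slope, φ, Function.comp_apply, AffineMap.lineMap_apply_zero,
    AffineMap.lineMap_apply_one, sub_zero, inv_one, vsub_eq_sub, one_smul] at hslope
  linarith

theorem isMinOn_sum_of_sum_hasGradientAt_eq_zero {ι : Type*} [Fintype ι] {s : Set E}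
    {f : ι → E → ℝ} {g : ι → E} {x : E} (hf : ∀ i, ConvexOn ℝ s (f i)) (hx : x ∈ s)
    (hg : ∀ i, HasGradientAt (f i) (g i) x) (hsum : ∑ i, g i = 0) :
    IsMinOn (fun z => ∑ i, f i z) s x := by
  intro z hz
  have hle : ∑ i, (f i x + ⟪g i, z - x⟫) ≤ ∑ i, f i z :=
    sum_le_sum fun i _ => (hf i).add_inner_le_of_hasGradientAt hx hz (hg i)
  rwa [sum_add_distrib, ← sum_inner, hsum, inner_zero_left, add_zero] at hle

end FirstOrder

section Consensus

variable {ι E : Type*} [Fintype ι] [AddCommGroup E] [Module ℝ E]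

theorem sum_inv_card_smul_sum_sub (v u : ι → E) :
    ∑ i, ((Fintype.card ι : ℝ)⁻¹ • ∑ j, v j - u i) = ∑ j, v j - ∑ i, u i := by
  rw [sum_sub_distrib, sum_const, card_univ, ← Nat.cast_smul_eq_nsmul ℝ, smul_smul]
  rcases eq_or_ne (Fintype.card ι : ℝ) 0 with hcard | hcard
  · have : IsEmpty ι := Fintype.card_eq_zero_iff.mp (by exact_mod_cast hcard)
    simp
  · rw [mul_inv_cancel₀ hcard, one_smul]

theorem sum_eq_zero_of_consensus_fixedPoint {ρ : ℝ} (hρ : ρ ≠ 0) {x y w : ι → E}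
    (hx : ∀ i, x i = (Fintype.card ι : ℝ)⁻¹ • ∑ j, x j - ρ⁻¹ • (y i + w i))
    (hy : ∀ i, y i = (Fintype.card ι : ℝ)⁻¹ • ∑ j, w j - w i) :
    ∑ i, w i = 0 := by
  have hy_sum : ∑ i, y i = 0 := by
    rw [sum_congr rfl fun i _ => hy i, sum_inv_card_smul_sum_sub, sub_self]
  have hx_sum : ∑ i, x i = ∑ i, x i - ρ⁻¹ • ∑ i, w i := by
    conv_lhs => rw [sum_congr rfl fun i _ => hx i, sum_inv_card_smul_sum_sub]
    rw [← smul_sum, sum_add_distrib, hy_sum, zero_add]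
  have : ρ⁻¹ • ∑ i, w i = 0 := by
    rwa [eq_comm, sub_eq_self] at hx_sum
  exact (smul_eq_zero.mp this).resolve_left (inv_ne_zero hρ)

theorem eq_of_consensus_fixedPoint {ρ : ℝ} (hρ : ρ ≠ 0) {x y w : ι → E}
    (hx : ∀ i, x i = (Fintype.card ι : ℝ)⁻¹ • ∑ j, x j - ρ⁻¹ • (y i + w i))
    (hy : ∀ i, y i = (Fintype.card ι : ℝ)⁻¹ • ∑ j, w j - w i) (i j : ι) :
    x i = x j := by
  have hw := sum_eq_zero_of_consensus_fixedPoint hρ hx hy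
  have hyw : ∀ k, y k + w k = 0 := fun k => by simp [hy k, hw]
  rw [hx i, hx j, hyw, hyw]

end Consensus

theorem stmt18_general {n d : ℕ} (ρ : ℝ) (hρ : 0 < ρ)
    (f : Fin n → EuclideanSpace ℝ (Fin d) → ℝ)
    (hconv : ∀ i, ConvexOn ℝ Set.univ (f i))
    (hdiff : ∀ i, Differentiable ℝ (f i))
    (x y w : Fin n → EuclideanSpace ℝ (Fin d))
    (hx : ∀ i, x i = (n : ℝ)⁻¹ • (∑ j, x j) - ρ⁻¹ • (y i + w i))
    (hy : ∀ i, y i = (n : ℝ)⁻¹ • (∑ j, w j) - w i)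
    (hw : ∀ i, w i = gradient (f i) (x i)) :
    (∀ i j, x i = x j) ∧ (∑ i, w i) = 0 ∧
      ∀ i, IsMinOn (fun z => (n : ℝ)⁻¹ * ∑ j, f j z) Set.univ (x i) := by
  have hcard : (Fintype.card (Fin n) : ℝ) = n := by rw [Fintype.card_fin]
  rw [← hcard] at hx hy
  have hconsensus := eq_of_consensus_fixedPoint hρ.ne' hx hy
  have hw_sum := sum_eq_zero_of_consensus_fixedPoint hρ.ne' hx hy
  refine ⟨hconsensus, hw_sum, fun i => ?_⟩
  have hgrad : ∀ j, HasGradientAt (f j) (w j) (x i) := fun j => by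
    rw [hw j, hconsensus j i]
    exact (hdiff j (x i)).hasGradientAt
  exact (isMinOn_sum_of_sum_hasGradientAt_eq_zero hconv (Set.mem_univ _) hgrad hw_sum).comp_mono
    (monotone_mul_left_of_nonneg (by positivity))

/-- At a fixed point of the centralized consensus ADMM iteration, all local variables agree,
the gradients sum to zero, and the common value minimizes `f₀ = (1/n) ∑ᵢ fᵢ`. -/
theorem stmt18 {n d : ℕ} (hn : 0 < n) (ρ : ℝ) (hρ : 0 < ρ)
    (f : Fin n → EuclideanSpace ℝ (Fin d) → ℝ)
    (hconv : ∀ i, ConvexOn ℝ Set.univ (f i))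
    (hdiff : ∀ i, Differentiable ℝ (f i))
    (x y w : Fin n → EuclideanSpace ℝ (Fin d))
    (hx : ∀ i, x i = (n : ℝ)⁻¹ • (∑ j, x j) - ρ⁻¹ • (y i + w i))
    (hy : ∀ i, y i = (n : ℝ)⁻¹ • (∑ j, w j) - w i)
    (hw : ∀ i, w i = gradient (f i) (x i)) :
    (∀ i j, x i = x j) ∧ (∑ i, w i) = 0 ∧
      ∀ i, IsMinOn (fun z => (n : ℝ)⁻¹ * ∑ j, f j z) Set.univ (x i) :=
  stmt18_general ρ hρ f hconv hdiff x y w hx hy hw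
end
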